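/- arXiv:2504.13697 — 2 statements merged into one kernel-verified Lean document; each statement's English description precedes it below -/
import Mathlib

section
/- (Reduction under equal channel gains) Fix positive reals τ, B, σ², payload sizes I > S > 0, a positive integer T, a common channel gain g > 0 (g_t = g for all t), nonnegative losses L_t ≥ 0, and a threshold L_th ≥ 0. Set c_S = (σ²/g)(2^{S/(τB)} − 1) and c_I = (σ²/g)(2^{I/(τB)} − 1), so c_I > c_S ≥ 0. Then every feasible point (p, x) of P_GS satisfies τ Σ_t p_t ≥ τ T c_S + τ (c_I − c_S) Σ_t x_t, and for every x ∈ {0,1}^T satisfying the loss constraint, the choice p_t = c_I if x_t = 1 and p_t = c_S if x_t = 0 is feasible and attains this bound with equality. Consequently the optimal value of P_GS equals τ T c_S + τ (c_I − c_S) · μ*, where μ* = min{ Σ_t x_t : x ∈ {0,1}^T, (1/T) Σ_t L_t (1 − x_t) ≤ L_th }. -/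
/-!
Inverting the rate constraint, a slot carrying `x_t I + (1 - x_t) S` bits needs power at least
`requiredPower (x_t I + (1 - x_t) S)`, which for binary `x_t` is the affine expression
`c_S + (c_I - c_S) x_t`.
Summing, the energy is bounded below by an increasing affine function of `Σ x_t`, and the
threshold powers attain it. Minimising the energy is therefore minimising `Σ x_t` over the loss
feasible binary vectors, a finite set that contains `x ≡ 1`.
-/

open Finset Real

/-- The inverse of the rate `τ B log₂ (1 + g p / σ2)`: the least power carrying `a` bits. -/
noncomputable def requiredPower (τ B σ2 g a : ℝ) : ℝ := σ2 / g * ((2 : ℝ) ^ (a / (τ * B)) - 1)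

section requiredPower

variable {τ B σ2 g : ℝ}

theorem le_rate_iff_requiredPower_le (hτ : 0 < τ) (hB : 0 < B) (hσ : 0 < σ2) (hg : 0 < g)
    {a p : ℝ} (hp : 0 ≤ p) :
    a ≤ τ * B * logb 2 (1 + g * p / σ2) ↔ requiredPower τ B σ2 g a ≤ p := by
  rw [← div_le_iff₀' (mul_pos hτ hB), le_logb_iff_rpow_le one_lt_two (by positivity),
    requiredPower, ← le_div_iff₀' (div_pos hσ hg), div_div_eq_mul_div, mul_comm p g,
    sub_le_iff_le_add']

theorem requiredPower_nonneg (hτ : 0 ≤ τ) (hB : 0 ≤ B) (hσ : 0 ≤ σ2) (hg : 0 ≤ g) {a : ℝ}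
    (ha : 0 ≤ a) : 0 ≤ requiredPower τ B σ2 g a :=
  mul_nonneg (div_nonneg hσ hg) (sub_nonneg.2 (one_le_rpow one_le_two (by positivity)))

theorem requiredPower_strictMono (hτ : 0 < τ) (hB : 0 < B) (hσ : 0 < σ2) (hg : 0 < g) :
    StrictMono (requiredPower τ B σ2 g) := fun _ _ hab =>
  mul_lt_mul_of_pos_left (sub_lt_sub_right (rpow_lt_rpow_of_exponent_lt one_lt_two
    (div_lt_div_of_pos_right hab (mul_pos hτ hB))) 1) (div_pos hσ hg)

end requiredPower

theorem apply_of_binary_eq_affine (f : ℝ → ℝ) {x : ℝ} (hx : x = 0 ∨ x = 1) (u v : ℝ) :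
    f (x * u + (1 - x) * v) = f v + (f u - f v) * x := by
  rcases hx with rfl | rfl <;> simp

theorem ite_of_binary_eq_affine {x : ℝ} (hx : x = 0 ∨ x = 1) (a b : ℝ) :
    (if x = 1 then b else a) = a + (b - a) * x := by
  rcases hx with rfl | rfl <;> simp

theorem sum_const_add_mul {ι : Type*} [Fintype ι] (c d : ℝ) (x : ι → ℝ) :
    ∑ i, (c + d * x i) = Fintype.card ι * c + d * ∑ i, x i := by
  simp [sum_add_distrib, mul_sum]

theorem finite_setOf_binary (ι : Type*) [Finite ι] :
    {x : ι → ℝ | ∀ i, x i = 0 ∨ x i = 1}.Finite := by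
  convert Set.Finite.pi (t := fun _ : ι => ({0, 1} : Set ℝ)) fun _ => by simp
  ext x; simp [Set.mem_pi]

theorem isLeast_sInf_sums_of_binary {ι : Type*} [Fintype ι] {P : (ι → ℝ) → Prop} {x₀ : ι → ℝ}
    (hx₀ : ∀ i, x₀ i = 0 ∨ x₀ i = 1) (hP : P x₀) :
    IsLeast {m : ℝ | ∃ x : ι → ℝ, (∀ i, x i = 0 ∨ x i = 1) ∧ P x ∧ m = ∑ i, x i}
      (sInf {m : ℝ | ∃ x : ι → ℝ, (∀ i, x i = 0 ∨ x i = 1) ∧ P x ∧ m = ∑ i, x i}) := by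
  set M := {m : ℝ | ∃ x : ι → ℝ, (∀ i, x i = 0 ∨ x i = 1) ∧ P x ∧ m = ∑ i, x i}
  have hfin : M.Finite := ((finite_setOf_binary ι).image fun x => ∑ i, x i).subset
    fun _ ⟨x, hx, _, hm⟩ => ⟨x, hx, hm.symm⟩
  exact ⟨Set.Nonempty.csInf_mem ⟨_, x₀, hx₀, hP, rfl⟩ hfin, fun _ hm => csInf_le hfin.bddBelow hm⟩

theorem isLeast_add_mul_of_forall_le {E M : Set ℝ} {A D m : ℝ} (hD : 0 ≤ D) (hm : IsLeast M m)
    (hle : ∀ e ∈ E, ∃ n ∈ M, A + D * n ≤ e) (hmem : ∀ n ∈ M, A + D * n ∈ E) :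
    IsLeast E (A + D * m) := by
  refine ⟨hmem m hm.1, fun e he => ?_⟩
  obtain ⟨n, hn, hne⟩ := hle e he
  exact le_trans (by gcongr; exact hm.2 hn) hne

theorem equal_gain_reduction_general (τ B σ2 I S Lth g : ℝ) (T : ℕ)
    (hτ : 0 < τ) (hB : 0 < B) (hσ : 0 < σ2) (hS : 0 < S) (hIS : S < I) (hg : 0 < g)
    (L : Fin T → ℝ) (hLth : 0 ≤ Lth) :
    let cS : ℝ := (σ2 / g) * ((2 : ℝ) ^ (S / (τ * B)) - 1)
    let cI : ℝ := (σ2 / g) * ((2 : ℝ) ^ (I / (τ * B)) - 1)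
    let Feasible : (Fin T → ℝ) → (Fin T → ℝ) → Prop := fun p x =>
      (∀ t, 0 ≤ p t) ∧ (∀ t, x t = 0 ∨ x t = 1) ∧
      (∀ t, x t * I + (1 - x t) * S ≤ τ * B * Real.logb 2 (1 + g * p t / σ2)) ∧
      (1 / (T : ℝ)) * ∑ t : Fin T, L t * (1 - x t) ≤ Lth
    (0 ≤ cS ∧ cS < cI) ∧
    (∀ p x, Feasible p x →
      τ * (T : ℝ) * cS + τ * (cI - cS) * ∑ t : Fin T, x t ≤ τ * ∑ t : Fin T, p t) ∧
    (∀ x : Fin T → ℝ, (∀ t, x t = 0 ∨ x t = 1) →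
      (1 / (T : ℝ)) * ∑ t : Fin T, L t * (1 - x t) ≤ Lth →
      Feasible (fun t => if x t = 1 then cI else cS) x ∧
      τ * ∑ t : Fin T, (if x t = 1 then cI else cS)
        = τ * (T : ℝ) * cS + τ * (cI - cS) * ∑ t : Fin T, x t) ∧
    IsLeast {E : ℝ | ∃ p x, Feasible p x ∧ E = τ * ∑ t : Fin T, p t}
      (τ * (T : ℝ) * cS + τ * (cI - cS) *
        sInf {m : ℝ | ∃ x : Fin T → ℝ, (∀ t, x t = 0 ∨ x t = 1) ∧
          (1 / (T : ℝ)) * ∑ t : Fin T, L t * (1 - x t) ≤ Lth ∧ m = ∑ t : Fin T, x t}) := by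
  intro cS cI Feasible
  have hcS : 0 ≤ cS := requiredPower_nonneg hτ.le hB.le hσ.le hg.le hS.le
  have hcSI : cS < cI := requiredPower_strictMono hτ hB hσ hg hIS
  have hrate {x : ℝ} (hx : x = 0 ∨ x = 1) {p : ℝ} (hp : 0 ≤ p) :
      x * I + (1 - x) * S ≤ τ * B * logb 2 (1 + g * p / σ2) ↔ cS + (cI - cS) * x ≤ p := by
    rw [le_rate_iff_requiredPower_le hτ hB hσ hg hp,
      apply_of_binary_eq_affine (requiredPower τ B σ2 g) hx]
    exact Iff.rfl
  have hcost (x : Fin T → ℝ) (hx : ∀ t, x t = 0 ∨ x t = 1) :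
      τ * ∑ t, (if x t = 1 then cI else cS) = τ * T * cS + τ * (cI - cS) * ∑ t, x t := by
    simp only [ite_of_binary_eq_affine (hx _), sum_const_add_mul, Fintype.card_fin]
    ring
  have hlb (p x) (hfeas : Feasible p x) :
      τ * T * cS + τ * (cI - cS) * ∑ t, x t ≤ τ * ∑ t, p t := by
    obtain ⟨hp, hx, hrates, -⟩ := hfeas
    have hsum : ∑ t, (cS + (cI - cS) * x t) ≤ ∑ t, p t :=
      sum_le_sum fun t _ => (hrate (hx t) (hp t)).1 (hrates t)
    rw [sum_const_add_mul, Fintype.card_fin] at hsum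
    linarith [mul_le_mul_of_nonneg_left hsum hτ.le]
  have hcand (x) (hx : ∀ t, x t = 0 ∨ x t = 1)
      (hloss : (1 / (T : ℝ)) * ∑ t, L t * (1 - x t) ≤ Lth) :
      Feasible (fun t => if x t = 1 then cI else cS) x := by
    have hp (t) : 0 ≤ if x t = 1 then cI else cS := by split_ifs <;> linarith
    exact ⟨hp, hx, fun t => (hrate (hx t) (hp t)).2 (ite_of_binary_eq_affine (hx t) _ _).ge, hloss⟩
  refine ⟨⟨hcS, hcSI⟩, hlb, fun x hx hloss => ⟨hcand x hx hloss, hcost x hx⟩,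
    isLeast_add_mul_of_forall_le (mul_nonneg hτ.le (sub_nonneg.2 hcSI.le))
      (isLeast_sInf_sums_of_binary (x₀ := 1) (fun _ => Or.inr rfl) (by simpa using hLth)) ?_ ?_⟩
  · rintro _ ⟨p, x, hfeas, rfl⟩
    exact ⟨_, ⟨x, hfeas.2.1, hfeas.2.2.2, rfl⟩, hlb p x hfeas⟩
  · rintro _ ⟨x, hx, hloss, rfl⟩
    exact ⟨_, x, hcand x hx hloss, (hcost x hx).symm⟩

/-- Reduction under equal channel gains: with `c_S = (σ²/g)(2^{S/(τB)} − 1)` and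
`c_I = (σ²/g)(2^{I/(τB)} − 1)`, every feasible point of `P_GS` satisfies
`τ Σ p_t ≥ τ T c_S + τ (c_I − c_S) Σ x_t`; for every binary `x` meeting the loss
constraint the power choice `p_t = c_I` if `x_t = 1` and `c_S` otherwise is feasible
and attains the bound with equality; and the optimal value of `P_GS` equals
`τ T c_S + τ (c_I − c_S) μ*` with `μ* = min{Σ x_t : x binary, loss constraint}`. -/
theorem equal_gain_reduction (τ B σ2 I S Lth g : ℝ) (T : ℕ) (hT : 0 < T)
    (hτ : 0 < τ) (hB : 0 < B) (hσ : 0 < σ2) (hS : 0 < S) (hIS : S < I) (hg : 0 < g)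
    (L : Fin T → ℝ) (hL : ∀ t, 0 ≤ L t) (hLth : 0 ≤ Lth) :
    let cS : ℝ := (σ2 / g) * ((2 : ℝ) ^ (S / (τ * B)) - 1)
    let cI : ℝ := (σ2 / g) * ((2 : ℝ) ^ (I / (τ * B)) - 1)
    let Feasible : (Fin T → ℝ) → (Fin T → ℝ) → Prop := fun p x =>
      (∀ t, 0 ≤ p t) ∧ (∀ t, x t = 0 ∨ x t = 1) ∧
      (∀ t, x t * I + (1 - x t) * S ≤ τ * B * Real.logb 2 (1 + g * p t / σ2)) ∧
      (1 / (T : ℝ)) * ∑ t : Fin T, L t * (1 - x t) ≤ Lth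
    (0 ≤ cS ∧ cS < cI) ∧
    (∀ p x, Feasible p x →
      τ * (T : ℝ) * cS + τ * (cI - cS) * ∑ t : Fin T, x t ≤ τ * ∑ t : Fin T, p t) ∧
    (∀ x : Fin T → ℝ, (∀ t, x t = 0 ∨ x t = 1) →
      (1 / (T : ℝ)) * ∑ t : Fin T, L t * (1 - x t) ≤ Lth →
      Feasible (fun t => if x t = 1 then cI else cS) x ∧
      τ * ∑ t : Fin T, (if x t = 1 then cI else cS)
        = τ * (T : ℝ) * cS + τ * (cI - cS) * ∑ t : Fin T, x t) ∧
    IsLeast {E : ℝ | ∃ p x, Feasible p x ∧ E = τ * ∑ t : Fin T, p t}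
      (τ * (T : ℝ) * cS + τ * (cI - cS) *
        sInf {m : ℝ | ∃ x : Fin T → ℝ, (∀ t, x t = 0 ∨ x t = 1) ∧
          (1 / (T : ℝ)) * ∑ t : Fin T, L t * (1 - x t) ≤ Lth ∧ m = ∑ t : Fin T, x t}) :=
  equal_gain_reduction_general τ B σ2 I S Lth g T hτ hB hσ hS hIS hg L hLth
end

section
/- (Proposition 2) Fix positive reals τ, B, σ², payload sizes I > S > 0, a positive integer T, nonnegative losses L_t ≥ 0, a threshold L_th ≥ 0, and suppose all channel gains are equal: g_t = g > 0 for every t. Let w be a permutation of {1,…,T} sorting the losses ascending, let k* be the largest k with Σ_{j=1}^{k} L_{w(j)} ≤ T · L_th, and define the ranking-based solution by x*_{w(j)} = 0 for j ≤ k* and x*_{w(j)} = 1 otherwise, with p*_t = (σ²/g)(2^{S/(τB)} − 1) if x*_t = 0 and p*_t = (σ²/g)(2^{I/(τB)} − 1) if x*_t = 1. Then (p*, x*) is feasible for P_GS, and for every feasible point (p, x) of P_GS it holds that τ Σ_t p*_t ≤ τ Σ_t p_t; i.e., the ranking-based solution is optimal to P_GS under equal channel gains. -/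
/-!
With equal gains, the least power that carries a payload `V` in one slot is
`(σ²/g)(2^{V/(τB)} - 1)`, the same for every slot and increasing in `V`. Hence the energy of a
feasible point is at least a quantity depending only on the number `m` of slots with `x_t = 0`,
and decreasing in `m`. Because the losses are sorted, the `m` smallest losses sum to at most the
losses of any `m` slots, so the loss constraint forces `m ≤ k*`, and the ranking solution attains
`m = k*` with the least powers.
-/

open Finset

theorem Fin.val_le_of_strictMono {m n : ℕ} {f : Fin m → Fin n} (hf : StrictMono f) (i : Fin m) :
    (i : ℕ) ≤ f i :=
  calc (i : ℕ) = #(Iio i) := (Fin.card_Iio i).symm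
    _ ≤ #(Iio (f i)) :=
        card_le_card_of_injOn f (fun j hj => by simpa using hf (by simpa using hj))
          hf.injective.injOn
    _ = f i := Fin.card_Iio (f i)

theorem Monotone.sum_filter_val_lt_card_le {n : ℕ} {M : Type*} [AddCommMonoid M] [PartialOrder M]
    [IsOrderedAddMonoid M] {f : Fin n → M} (hf : Monotone f) (s : Finset (Fin n)) :
    ∑ j ∈ univ.filter (fun j : Fin n => (j : ℕ) < #s), f j ≤ ∑ j ∈ s, f j := by
  have hs : #s ≤ n := by simpa using card_le_univ s
  have hinit : univ.filter (fun j : Fin n => (j : ℕ) < #s) = univ.map (Fin.castLEEmb hs) := by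
    ext j
    exact ⟨fun hj => mem_map.mpr ⟨⟨j, (mem_filter.mp hj).2⟩, mem_univ _, rfl⟩,
      fun hj => by obtain ⟨i, -, rfl⟩ := mem_map.mp hj; simp⟩
  calc _ = ∑ i : Fin #s, f (Fin.castLE hs i) := by rw [hinit, sum_map]; rfl
    _ ≤ ∑ i : Fin #s, f (s.orderEmbOfFin rfl i) := sum_le_sum fun i _ =>
        hf (Fin.le_iff_val_le_val.mpr
          (Fin.val_le_of_strictMono (s.orderEmbOfFin rfl).strictMono i))
    _ = ∑ j ∈ s, f j := by
        conv_rhs => rw [← map_orderEmbOfFin_univ s rfl, sum_map]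
        rfl

theorem card_le_of_sum_le_of_maximal {n k : ℕ} {M : Type*} [AddCommMonoid M] [PartialOrder M]
    [IsOrderedAddMonoid M] {L : Fin n → M} {w : Equiv.Perm (Fin n)} {c : M}
    (hsort : Monotone (fun j => L (w j)))
    (hkmax : ∀ k' ≤ n,
      ∑ j ∈ univ.filter (fun j : Fin n => (j : ℕ) < k'), L (w j) ≤ c → k' ≤ k)
    {A : Finset (Fin n)} (hA : ∑ t ∈ A, L t ≤ c) : #A ≤ k := by
  refine hkmax _ (card_le_univ A |>.trans_eq (Fintype.card_fin n)) (le_trans ?_ hA)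
  simpa using hsort.sum_filter_val_lt_card_le (A.map w.symm.toEmbedding)

theorem sum_ite_le_sum_ite_of_card_filter_le {ι M : Type*} [Fintype ι] [AddCommGroup M]
    [PartialOrder M] [IsOrderedAddMonoid M] {P Q : ι → Prop} [DecidablePred P] [DecidablePred Q]
    {a b : M} (hab : a ≤ b) (hPQ : #{i | P i} ≤ #{i | Q i}) :
    ∑ i, (if Q i then a else b) ≤ ∑ i, (if P i then a else b) := by
  have key (R : ι → Prop) [DecidablePred R] :
      ∑ i, (if R i then a else b) = ∑ _i : ι, b - #{i | R i} • (b - a) := by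
    have h (i : ι) : (if R i then a else b) = b - if R i then b - a else 0 := by
      split_ifs <;> abel
    rw [sum_congr rfl fun i _ => h i, sum_sub_distrib, ← sum_filter, sum_const (b - a)]
  rw [key P, key Q]
  exact sub_le_sub_left (nsmul_le_nsmul_left (sub_nonneg.mpr hab) hPQ) _

theorem sum_mul_one_sub_eq_sum_filter {ι R : Type*} [Fintype ι] [Ring R] [DecidableEq R]
    {L x : ι → R} (hx : ∀ t, x t = 0 ∨ x t = 1) :
    ∑ t, L t * (1 - x t) = ∑ t with x t = 0, L t := by
  rw [sum_filter]
  refine sum_congr rfl fun t _ => ?_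
  split_ifs with h
  · simp [h]
  · simp [(hx t).resolve_left h]

noncomputable def rate (τ B σ2 g p : ℝ) : ℝ := τ * B * Real.logb 2 (1 + g * p / σ2)

noncomputable def minPower (τ B σ2 g V : ℝ) : ℝ := σ2 / g * ((2 : ℝ) ^ (V / (τ * B)) - 1)

section Power

variable {τ B σ2 g : ℝ}

theorem le_rate_iff_minPower_le (hτB : 0 < τ * B) (hσ : 0 < σ2) (hg : 0 < g) {V p : ℝ}
    (hp : 0 ≤ p) :
    V ≤ rate τ B σ2 g p ↔ minPower τ B σ2 g V ≤ p := by
  have hy : 0 < 1 + g * p / σ2 := by positivity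
  rw [rate, minPower, ← div_le_iff₀' hτB, Real.le_logb_iff_rpow_le one_lt_two hy,
    ← le_div_iff₀' (div_pos hσ hg), ← sub_le_iff_le_add', div_div_eq_mul_div, mul_comm p]

theorem payload_le_rate_iff (hτB : 0 < τ * B) (hσ : 0 < σ2) (hg : 0 < g) {I S x p : ℝ}
    (hp : 0 ≤ p) (hx : x = 0 ∨ x = 1) :
    x * I + (1 - x) * S ≤ rate τ B σ2 g p ↔
      minPower τ B σ2 g (if x = 0 then S else I) ≤ p := by
  rcases hx with rfl | rfl <;> simp [le_rate_iff_minPower_le hτB hσ hg hp]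

theorem minPower_nonneg (hτB : 0 < τ * B) (hσ : 0 < σ2) (hg : 0 < g) {V : ℝ} (hV : 0 ≤ V) :
    0 ≤ minPower τ B σ2 g V :=
  mul_nonneg (div_nonneg hσ.le hg.le)
    (sub_nonneg.mpr (Real.one_le_rpow one_le_two (div_nonneg hV hτB.le)))

theorem minPower_mono (hτB : 0 < τ * B) (hσ : 0 < σ2) (hg : 0 < g) :
    Monotone (minPower τ B σ2 g) := fun _ _ hVW =>
  mul_le_mul_of_nonneg_left (sub_le_sub_right (Real.rpow_le_rpow_of_exponent_le one_le_two
    (div_le_div_of_nonneg_right hVW hτB.le)) 1) (div_nonneg hσ.le hg.le)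

end Power

theorem ranking_solution_optimal_general (τ B σ2 I S Lth g : ℝ) (T : ℕ) (hT : 0 < T)
    (hτ : 0 < τ) (hB : 0 < B) (hσ : 0 < σ2) (hS : 0 < S) (hIS : S < I) (hg : 0 < g)
    (L : Fin T → ℝ)
    (w : Equiv.Perm (Fin T))
    (hsort : ∀ j j' : Fin T, j ≤ j' → L (w j) ≤ L (w j'))
    (k : ℕ) (hk : k ≤ T)
    (hks : ∑ j ∈ Finset.univ.filter (fun j : Fin T => (j : ℕ) < k), L (w j) ≤ (T : ℝ) * Lth)
    (hkmax : ∀ k' : ℕ, k' ≤ T →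
      (∑ j ∈ Finset.univ.filter (fun j : Fin T => (j : ℕ) < k'), L (w j) ≤ (T : ℝ) * Lth) →
      k' ≤ k) :
    let xs : Fin T → ℝ := fun t => if ((w.symm t : Fin T) : ℕ) < k then 0 else 1
    let ps : Fin T → ℝ := fun t =>
      if xs t = 0 then (σ2 / g) * ((2 : ℝ) ^ (S / (τ * B)) - 1)
      else (σ2 / g) * ((2 : ℝ) ^ (I / (τ * B)) - 1)
    let Feasible : (Fin T → ℝ) → (Fin T → ℝ) → Prop := fun p x =>
      (∀ t, 0 ≤ p t) ∧ (∀ t, x t = 0 ∨ x t = 1) ∧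
      (∀ t, x t * I + (1 - x t) * S ≤ τ * B * Real.logb 2 (1 + g * p t / σ2)) ∧
      (1 / (T : ℝ)) * ∑ t : Fin T, L t * (1 - x t) ≤ Lth
    Feasible ps xs ∧
    ∀ p x, Feasible p x → τ * ∑ t : Fin T, ps t ≤ τ * ∑ t : Fin T, p t := by
  intro xs ps Feasible
  have hτB : 0 < τ * B := mul_pos hτ hB
  have hloss {x : Fin T → ℝ} (hx : ∀ t, x t = 0 ∨ x t = 1) :
      (1 / (T : ℝ)) * ∑ t, L t * (1 - x t) ≤ Lth ↔ ∑ t with x t = 0, L t ≤ T * Lth := by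
    rw [sum_mul_one_sub_eq_sum_filter hx, one_div, inv_mul_le_iff₀ (Nat.cast_pos.mpr hT)]
  have hxs t : xs t = 0 ∨ xs t = 1 := by unfold xs; split_ifs <;> simp
  have hps_eq t : ps t = minPower τ B σ2 g (if xs t = 0 then S else I) := by
    unfold ps minPower; split_ifs <;> rfl
  have hps t : 0 ≤ ps t := hps_eq t ▸ minPower_nonneg hτB hσ hg (by split_ifs <;> linarith)
  have hzeros : univ.filter (xs · = 0) =
      (univ.filter (fun j : Fin T => (j : ℕ) < k)).map w.toEmbedding := by
    ext t; simp [xs]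
  refine ⟨⟨hps, hxs,
    fun t => (payload_le_rate_iff hτB hσ hg (hps t) (hxs t)).mpr (hps_eq t).ge,
    (hloss hxs).mpr (by rwa [hzeros, sum_map])⟩, ?_⟩
  rintro p x ⟨hp, hx, hrate, hLx⟩
  have hcard : #{t | x t = 0} ≤ #{t | xs t = 0} := by
    rw [hzeros, card_map, Fin.card_filter_val_lt, min_eq_right hk]
    exact card_le_of_sum_le_of_maximal hsort hkmax ((hloss hx).mp hLx)
  refine mul_le_mul_of_nonneg_left ?_ hτ.le
  calc ∑ t, ps t = ∑ t, minPower τ B σ2 g (if xs t = 0 then S else I) :=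
        sum_congr rfl fun t _ => hps_eq t
    _ ≤ ∑ t, minPower τ B σ2 g (if x t = 0 then S else I) := by
      simp only [apply_ite (minPower τ B σ2 g)]
      exact sum_ite_le_sum_ite_of_card_filter_le (minPower_mono hτB hσ hg hIS.le) hcard
    _ ≤ ∑ t, p t := sum_le_sum fun t _ =>
      (payload_le_rate_iff hτB hσ hg (hp t) (hx t)).mp (hrate t)

/-- Proposition 2: under equal channel gains, the ranking-based solution `(p*, x*)` is
feasible for `P_GS` and optimal, i.e. its energy is at most that of any feasible point. -/
theorem ranking_solution_optimal (τ B σ2 I S Lth g : ℝ) (T : ℕ) (hT : 0 < T)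
    (hτ : 0 < τ) (hB : 0 < B) (hσ : 0 < σ2) (hS : 0 < S) (hIS : S < I) (hg : 0 < g)
    (L : Fin T → ℝ) (hL : ∀ t, 0 ≤ L t) (hLth : 0 ≤ Lth)
    (w : Equiv.Perm (Fin T))
    (hsort : ∀ j j' : Fin T, j ≤ j' → L (w j) ≤ L (w j'))
    (k : ℕ) (hk : k ≤ T)
    (hks : ∑ j ∈ Finset.univ.filter (fun j : Fin T => (j : ℕ) < k), L (w j) ≤ (T : ℝ) * Lth)
    (hkmax : ∀ k' : ℕ, k' ≤ T →
      (∑ j ∈ Finset.univ.filter (fun j : Fin T => (j : ℕ) < k'), L (w j) ≤ (T : ℝ) * Lth) →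
      k' ≤ k) :
    let xs : Fin T → ℝ := fun t => if ((w.symm t : Fin T) : ℕ) < k then 0 else 1
    let ps : Fin T → ℝ := fun t =>
      if xs t = 0 then (σ2 / g) * ((2 : ℝ) ^ (S / (τ * B)) - 1)
      else (σ2 / g) * ((2 : ℝ) ^ (I / (τ * B)) - 1)
    let Feasible : (Fin T → ℝ) → (Fin T → ℝ) → Prop := fun p x =>
      (∀ t, 0 ≤ p t) ∧ (∀ t, x t = 0 ∨ x t = 1) ∧
      (∀ t, x t * I + (1 - x t) * S ≤ τ * B * Real.logb 2 (1 + g * p t / σ2)) ∧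
      (1 / (T : ℝ)) * ∑ t : Fin T, L t * (1 - x t) ≤ Lth
    Feasible ps xs ∧
    ∀ p x, Feasible p x → τ * ∑ t : Fin T, ps t ≤ τ * ∑ t : Fin T, p t :=
  ranking_solution_optimal_general τ B σ2 I S Lth g T hT hτ hB hσ hS hIS hg L w hsort k hk hks hkmax
end
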